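/- Let G be a connected finite graph (multiple edges allowed, no loops) with a cutedge x₁x₂, let G₁ and G₂ be the components of G − x₁x₂ with x₁ ∈ V(G₁) and x₂ ∈ V(G₂), let i ∈ {1,2}, wᵢ ∈ V(Gᵢ), and λᵢ ∈ {0,1}. Assume that every connected graph with fewer vertices than G that is not regular bipartite has, for every choice of root vertex and type, a spanning weakly even rooted tree. Then there is a spanning (wᵢ,λᵢ)-tree Tᵢ of Gᵢ such that no vertex of Tᵢ other than possibly xᵢ is a type-1 leaf of Tᵢ with maximum degree in G. -/

import Mathlib

/-- A multigraph on vertex type `V` with edge type `E`: each edge is assigned an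
unordered pair of distinct endpoints (multiple edges allowed, no loops). -/
structure Multigraph (V : Type) (E : Type) where
  inc : E → Sym2 V
  loopless : ∀ e : E, ¬ (inc e).IsDiag

namespace Multigraph

variable {V E : Type}

/-- `u` and `v` are joined by an edge belonging to the edge set `S`. -/
def AdjOn (G : Multigraph V E) (S : Set E) (u v : V) : Prop :=
  ∃ e ∈ S, G.inc e = s(u, v)

/-- `v` is reachable from `u` using edges in `S`. -/
def ReachOn (G : Multigraph V E) (S : Set E) (u v : V) : Prop :=
  Relation.ReflTransGen (G.AdjOn S) u v

/-- `G` is connected. -/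
def Connected (G : Multigraph V E) : Prop :=
  Nonempty V ∧ ∀ u v : V, G.ReachOn Set.univ u v

/-- The degree of `v` in the spanning subgraph with edge set `S`. -/
noncomputable def degOn (G : Multigraph V E) (S : Set E) (v : V) : ℕ :=
  {e ∈ S | v ∈ G.inc e}.ncard

/-- The degree of `v` in `G`. -/
noncomputable def degree (G : Multigraph V E) (v : V) : ℕ :=
  G.degOn Set.univ v

/-- The maximum degree `Δ(G)`. -/
noncomputable def maxDegree (G : Multigraph V E) [Fintype V] : ℕ :=
  Finset.univ.sup G.degree

/-- `G` is regular. -/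
def IsRegular (G : Multigraph V E) : Prop :=
  ∃ r : ℕ, ∀ v : V, G.degree v = r

/-- The 2-colouring `c` is proper on the edge set `S`: the two endpoints of any
edge of `S` receive different colours. -/
def ProperOn (G : Multigraph V E) (S : Set E) (c : V → Bool) : Prop :=
  ∀ e ∈ S, ∀ u v : V, G.inc e = s(u, v) → c u ≠ c v

/-- `G` is bipartite. -/
def IsBipartite (G : Multigraph V E) : Prop :=
  ∃ c : V → Bool, G.ProperOn Set.univ c

/-- The sub-multigraph of `G` with vertex set `U` and edge set `S` is a tree:
`U` is nonempty, every edge of `S` joins vertices of `U`, any two vertices of `U`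
are joined by a walk using edges of `S`, and there are exactly `|U| - 1` edges
(which forces acyclicity, and in particular forbids parallel edges in `S`). -/
structure IsTree (G : Multigraph V E) (U : Set V) (S : Set E) : Prop where
  nonempty : U.Nonempty
  edges_in : ∀ e ∈ S, ∀ v : V, v ∈ G.inc e → v ∈ U
  conn : ∀ u ∈ U, ∀ v ∈ U, G.ReachOn S u v
  card_eq : S.ncard + 1 = U.ncard

/-- `v` is a leaf of the subgraph with edge set `S`. -/
def IsLeaf (G : Multigraph V E) (S : Set E) (v : V) : Prop :=
  G.degOn S v = 1

/-- `e` is a cutedge: after removing `e`, some pair of vertices is separated. -/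
def IsCutedge (G : Multigraph V E) (e : E) : Prop :=
  ∃ u v : V, ¬ G.ReachOn {e}ᶜ u v

/-- `G` is 2-edge-connected: connected and without cutedges. -/
def TwoEdgeConnected (G : Multigraph V E) : Prop :=
  G.Connected ∧ ∀ e : E, ¬ G.IsCutedge e

/-- The edge set `S` is a weak 2-factor of `G`: every vertex has degree at most
2 in `S` (equivalently, every component of the spanning subgraph is a path —
possibly a single vertex — or a cycle), and every vertex of degree less than 2
in `S` (i.e. every endvertex of a path component) has degree less than `Δ(G)`
in `G`. -/
def IsWeakTwoFactor (G : Multigraph V E) [Fintype V] (S : Set E) : Prop :=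
  ∀ v : V, G.degOn S v ≤ 2 ∧ (G.degOn S v < 2 → G.degree v < G.maxDegree)

end Multigraph

/-!
Let `A` be the side of `x₁` in `G - x₁x₂` (the other side is symmetric) and `H = G[A]`, which
has fewer vertices than `G`. Every vertex of `A` other than `x₁` has the same degree in `H` as in
`G`, and `Δ(H) ≤ Δ(G)`. If `H` is not regular bipartite, a weakly even spanning tree of `H` from
the induction hypothesis therefore has no type-1 leaf of degree `Δ(G)` other than possibly `x₁`.
If `H` is `r`-regular, every vertex of `A` other than `x₁` has degree `r < deg_G x₁ ≤ Δ(G)`, so any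
spanning tree of `H`, typed by a bipartition of `H`, works.
-/

namespace Multigraph

variable {V E : Type} {G : Multigraph V E}

section Reachability

variable {S T : Set E} {u v w : V}

lemma AdjOn.symm (h : G.AdjOn S u v) : G.AdjOn S v u := by
  obtain ⟨e, he, hi⟩ := h
  exact ⟨e, he, hi.trans Sym2.eq_swap⟩

lemma ReachOn.symm (h : G.ReachOn S u v) : G.ReachOn S v u := by
  induction h with
  | refl => exact .refl
  | tail _ hbc ih => exact .head hbc.symm ih

lemma ReachOn.trans (h : G.ReachOn S u v) (h' : G.ReachOn S v w) : G.ReachOn S u w :=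
  Relation.ReflTransGen.trans h h'

lemma ReachOn.mono (hST : S ⊆ T) (h : G.ReachOn S u v) : G.ReachOn T u v :=
  Relation.ReflTransGen.mono (fun _ _ ⟨e, he, hi⟩ => ⟨e, hST he, hi⟩) _ _ h

lemma ReachOn.exists_boundary_edge {U : Set V} (h : G.ReachOn S u v) (hu : u ∈ U)
    (hv : v ∉ U) :
    ∃ p ∈ U, ∃ q ∉ U, ∃ e ∈ S, G.inc e = s(p, q) := by
  induction h with
  | refl => exact absurd hu hv
  | @tail b c _ hbc ih =>
    by_cases hb : b ∈ U
    · obtain ⟨e, he, hi⟩ := hbc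
      exact ⟨b, hb, c, hv, e, he, hi⟩
    · exact ih hb

lemma IsCutedge.not_reachOn (hG : G.Connected) {e : E} (hcut : G.IsCutedge e)
    (he : G.inc e = s(u, v)) : ¬ G.ReachOn {e}ᶜ u v := by
  intro huv
  obtain ⟨a, b, hab⟩ := hcut
  refine hab (Relation.reflTransGen_closed ?_ _ _ (hG.2 a b))
  rintro p q ⟨f, -, hf⟩
  by_cases hfe : f = e
  · subst hfe
    rcases Sym2.eq_iff.1 (hf.symm.trans he) with ⟨rfl, rfl⟩ | ⟨rfl, rfl⟩
    · exact huv
    · exact huv.symm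
  · exact .single ⟨f, hfe, hf⟩

end Reachability

section SpanningTrees

lemma isTree_singleton (x : V) : G.IsTree {x} ∅ where
  nonempty := Set.singleton_nonempty x
  edges_in _ he := absurd he (Set.notMem_empty _)
  conn u hu v hv := by
    rw [Set.eq_of_mem_singleton hu, Set.eq_of_mem_singleton hv]
    exact .refl
  card_eq := by rw [Set.ncard_empty, Set.ncard_singleton]

variable [Finite V] [Finite E] {S T : Set E}

lemma IsTree.insert_pendant {U : Set V} (hT : G.IsTree U S) {p q : V} {e : E}
    (hp : p ∈ U) (hq : q ∉ U) (he : G.inc e = s(p, q)) :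
    G.IsTree (insert q U) (insert e S) where
  nonempty := hT.nonempty.mono (Set.subset_insert _ _)
  edges_in f hf v hv := by
    rcases hf with rfl | hf
    · rw [he, Sym2.mem_iff] at hv
      rcases hv with rfl | rfl
      · exact Set.mem_insert_of_mem _ hp
      · exact Set.mem_insert _ _
    · exact Set.mem_insert_of_mem _ (hT.edges_in f hf v hv)
  conn := by
    have hreach_p : ∀ u ∈ insert q U, G.ReachOn (insert e S) u p := by
      rintro u (rfl | hu)
      · exact .single ⟨e, Set.mem_insert _ _, he.trans Sym2.eq_swap⟩
      · exact (hT.conn u hu p hp).mono (Set.subset_insert _ _)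
    exact fun u hu v hv => (hreach_p u hu).trans (hreach_p v hv).symm
  card_eq := by
    have heS : e ∉ S := fun heS => hq (hT.edges_in e heS q (he ▸ Sym2.mem_mk_right p q))
    rw [Set.ncard_insert_of_notMem heS, Set.ncard_insert_of_notMem hq, hT.card_eq]

lemma exists_isTree_reachOn (T : Set E) (x : V) :
    ∃ S ⊆ T, G.IsTree {v | G.ReachOn T x v} S := by
  set C := {v | G.ReachOn T x v}
  by_contra! hnone
  -- a tree in `C` through `x` that misses part of `C` grows by a pendant edge of `T`,
  -- so there would be trees with more than `Nat.card V` vertices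
  have hgrow : ∀ n : ℕ, ∃ U ⊆ C, x ∈ U ∧ ∃ S ⊆ T, G.IsTree U S ∧ n ≤ U.ncard := by
    intro n
    induction n with
    | zero =>
      exact ⟨{x}, Set.singleton_subset_iff.2 .refl, rfl, ∅, Set.empty_subset _,
        isTree_singleton x, Nat.zero_le _⟩
    | succ n ih =>
      obtain ⟨U, hUC, hxU, S, hST, hUS, hn⟩ := ih
      obtain ⟨a, haC, haU⟩ :=
        Set.exists_of_ssubset (hUC.ssubset_of_ne (by rintro rfl; exact hnone S hST hUS))
      obtain ⟨p, hp, q, hq, e, heT, he⟩ := ReachOn.exists_boundary_edge haC hxU haU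
      refine ⟨insert q U, Set.insert_subset (.tail (hUC hp) ⟨e, heT, he⟩) hUC,
        Set.mem_insert_of_mem _ hxU, insert e S, Set.insert_subset heT hST,
        hUS.insert_pendant hp hq he, ?_⟩
      rw [Set.ncard_insert_of_notMem hq]
      omega
  obtain ⟨U, -, -, -, -, -, hU⟩ := hgrow (Nat.card V + 1)
  have := Set.ncard_le_card U
  omega

lemma Connected.exists_isTree_univ (hG : G.Connected) : ∃ S, G.IsTree Set.univ S := by
  obtain ⟨x⟩ := hG.1
  obtain ⟨S, -, hS⟩ := exists_isTree_reachOn (G := G) Set.univ x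
  have hC : {v | G.ReachOn Set.univ x v} = Set.univ := Set.eq_univ_of_forall (hG.2 x)
  exact ⟨S, hC ▸ hS⟩

end SpanningTrees

section Colorings

variable {S T : Set E}

lemma ProperOn.mono {c : V → Bool} (h : G.ProperOn T c) (hST : S ⊆ T) : G.ProperOn S c :=
  fun e he => h e (hST he)

lemma IsBipartite.exists_properOn (hG : G.IsBipartite) (w : V) (b : Bool) :
    ∃ c : V → Bool, G.ProperOn Set.univ c ∧ c w = b := by
  obtain ⟨c, hc⟩ := hG
  refine ⟨fun v => xor (c v) (xor (c w) b), fun e he u v huv => ?_, by simp⟩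
  simpa using hc e he u v huv

end Colorings

section Degrees

variable {S : Set E} {v : V}

lemma degOn_le_degree [Finite E] : G.degOn S v ≤ G.degree v :=
  Set.ncard_le_ncard fun e he => ⟨Set.mem_univ e, he.2⟩

lemma degOn_lt_degree [Finite E] {e : E} (he : e ∉ S) (hv : v ∈ G.inc e) :
    G.degOn S v < G.degree v :=
  Set.ncard_lt_ncard
    ⟨fun f ⟨_, hf⟩ => ⟨Set.mem_univ f, hf⟩, fun h => he (h ⟨Set.mem_univ e, hv⟩).1⟩

lemma degOn_eq_degree (h : ∀ e, v ∈ G.inc e → e ∈ S) : G.degOn S v = G.degree v := by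
  unfold degree degOn
  congr 1
  ext e
  exact ⟨fun he => ⟨Set.mem_univ e, he.2⟩, fun he => ⟨h e he.2, he.2⟩⟩

lemma degree_le_maxDegree [Fintype V] (v : V) : G.degree v ≤ G.maxDegree :=
  Finset.le_sup (Finset.mem_univ v)

end Degrees

section Induce

variable {A : Set V}

def edgesIn (G : Multigraph V E) (A : Set V) : Set E :=
  {e | ∀ v ∈ G.inc e, v ∈ A}

noncomputable def induce (G : Multigraph V E) (A : Set V) : Multigraph A (G.edgesIn A) where
  inc e := (G.inc e.1).attachWith e.2
  loopless e h := G.loopless e.1 (by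
    convert Sym2.IsDiag.map (f := Subtype.val) h using 1
    exact (Sym2.attachWith_map_subtypeVal _).symm)

lemma map_val_induce_inc (e : G.edgesIn A) :
    Sym2.map Subtype.val ((G.induce A).inc e) = G.inc e.1 :=
  Sym2.attachWith_map_subtypeVal _

lemma induce_inc_eq {e : G.edgesIn A} {a b : V} (ha : a ∈ A) (hb : b ∈ A)
    (h : G.inc e.1 = s(a, b)) : (G.induce A).inc e = s(⟨a, ha⟩, ⟨b, hb⟩) := by
  apply Sym2.map.injective Subtype.val_injective
  rw [map_val_induce_inc, h, Sym2.map_mk]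

lemma inc_eq_of_induce_inc_eq {e : G.edgesIn A} {a b : A}
    (h : (G.induce A).inc e = s(a, b)) : G.inc e.1 = s(a.1, b.1) := by
  rw [← map_val_induce_inc, h, Sym2.map_mk]

lemma mem_induce_inc {e : G.edgesIn A} {v : A} :
    v ∈ (G.induce A).inc e ↔ v.1 ∈ G.inc e.1 := by
  rw [← map_val_induce_inc, Sym2.mem_map]
  exact ⟨fun h => ⟨v, h, rfl⟩, fun ⟨a, ha, hav⟩ => Subtype.val_injective hav ▸ ha⟩

lemma degOn_induce (S : Set (G.edgesIn A)) (v : A) :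
    (G.induce A).degOn S v = G.degOn (Subtype.val '' S) v := by
  unfold degOn
  rw [← Set.ncard_image_of_injective _ Subtype.val_injective]
  congr 1
  ext e
  constructor
  · rintro ⟨e', ⟨he', hv⟩, rfl⟩
    exact ⟨⟨e', he', rfl⟩, mem_induce_inc.1 hv⟩
  · rintro ⟨⟨e', he', rfl⟩, hv⟩
    exact ⟨e', ⟨he', mem_induce_inc.2 hv⟩, rfl⟩

lemma isLeaf_induce_iff {S : Set (G.edgesIn A)} {v : A} :
    (G.induce A).IsLeaf S v ↔ G.IsLeaf (Subtype.val '' S) v := by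
  rw [IsLeaf, IsLeaf, degOn_induce]

lemma degree_induce (v : A) : (G.induce A).degree v = G.degOn (G.edgesIn A) v := by
  rw [degree, degOn_induce, Subtype.coe_image_univ]

lemma maxDegree_induce_le [Fintype V] [Finite E] [Fintype A] :
    (G.induce A).maxDegree ≤ G.maxDegree :=
  Finset.sup_le fun v _ => (degree_induce v).trans_le
    (degOn_le_degree.trans (G.degree_le_maxDegree v.1))

lemma IsTree.of_induce [Finite V] {S : Set (G.edgesIn A)} (h : (G.induce A).IsTree Set.univ S) :
    G.IsTree A (Subtype.val '' S) where
  nonempty := let ⟨v, _⟩ := h.nonempty; ⟨v.1, v.2⟩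
  edges_in := by
    rintro e ⟨e', -, rfl⟩ v hv
    exact e'.2 v hv
  conn u hu v hv := by
    refine Relation.ReflTransGen.lift Subtype.val ?_ _ _
      (h.conn ⟨u, hu⟩ (Set.mem_univ _) ⟨v, hv⟩ (Set.mem_univ _))
    intro a b (hab : (G.induce A).AdjOn S a b)
    obtain ⟨e', he', hi⟩ := hab
    exact ⟨e'.1, ⟨e', he', rfl⟩, inc_eq_of_induce_inc_eq hi⟩
  card_eq := by
    simpa only [Set.ncard_image_of_injective _ Subtype.val_injective, Set.ncard_univ,
      Nat.card_coe_set_eq] using h.card_eq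

lemma extend_val_apply {c : A → Bool} {f : V → Bool} {v : V} (hv : v ∈ A) :
    Function.extend Subtype.val c f v = c ⟨v, hv⟩ :=
  Subtype.val_injective.extend_apply c f ⟨v, hv⟩

lemma ProperOn.of_induce {S : Set (G.edgesIn A)} {c : A → Bool}
    (h : (G.induce A).ProperOn S c) :
    G.ProperOn (Subtype.val '' S) (Function.extend Subtype.val c fun _ => false) := by
  rintro e ⟨e', he', rfl⟩ u v huv
  have hu : u ∈ A := e'.2 u (huv ▸ Sym2.mem_mk_left u v)
  have hv : v ∈ A := e'.2 v (huv ▸ Sym2.mem_mk_right u v)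
  rw [extend_val_apply hu, extend_val_apply hv]
  exact h e' he' _ _ (induce_inc_eq hu hv huv)

end Induce

section Component

variable {T : Set E} {x : V}

lemma mem_edgesIn_of_reachOn {v : V} (hv : G.ReachOn T x v) {e : E} (he : e ∈ T)
    (hve : v ∈ G.inc e) : e ∈ G.edgesIn {v | G.ReachOn T x v} := by
  intro w hw
  rw [← Sym2.other_spec hve, Sym2.mem_iff] at hw
  rcases hw with rfl | rfl
  · exact hv
  · exact hv.tail ⟨e, he, (Sym2.other_spec hve).symm⟩

lemma connected_induce_reachOn (T : Set E) (x : V) :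
    (G.induce {v | G.ReachOn T x v}).Connected := by
  set A := {v | G.ReachOn T x v}
  have hlift : ∀ v (hv : v ∈ A), (G.induce A).ReachOn Set.univ ⟨x, .refl⟩ ⟨v, hv⟩ := by
    intro v hv
    induction hv with
    | refl => exact .refl
    | @tail b c hb hbc ih =>
      obtain ⟨e, he, hi⟩ := hbc
      exact ih.tail ⟨⟨e, mem_edgesIn_of_reachOn hb he (hi ▸ Sym2.mem_mk_left b c)⟩,
        Set.mem_univ _, induce_inc_eq _ _ hi⟩
  exact ⟨⟨⟨x, .refl⟩⟩, fun u v => (hlift u u.2).symm.trans (hlift v v.2)⟩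

lemma degree_induce_reachOn (v : {v | G.ReachOn T x v}) (hT : ∀ e, v.1 ∈ G.inc e → e ∈ T) :
    (G.induce {v | G.ReachOn T x v}).degree v = G.degree v := by
  rw [degree_induce]
  exact degOn_eq_degree fun e he => mem_edgesIn_of_reachOn v.2 (hT e he) he

end Component

/-- `c` is the bipartition of the tree, `false` being type 0. -/
def HasWeaklyEvenSpanningTrees (G : Multigraph V E) [Fintype V] : Prop :=
  ∀ (w : V) (lam : Bool), ∃ (S : Set E) (c : V → Bool),
    G.IsTree Set.univ S ∧ G.ProperOn S c ∧ c w = lam ∧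
    ∀ v : V, G.IsLeaf S v → G.degree v = G.maxDegree → c v = false

section CutedgeSide

variable {e0 : E} {x y : V}

lemma notMem_edgesIn_compl_reachOn (he0 : G.inc e0 = s(x, y))
    (hxy : ¬ G.ReachOn {e0}ᶜ x y) : e0 ∉ G.edgesIn {v | G.ReachOn {e0}ᶜ x v} :=
  fun h => hxy (h y (he0 ▸ Sym2.mem_mk_right x y))

lemma degree_induce_compl_reachOn (he0 : G.inc e0 = s(x, y)) (hxy : ¬ G.ReachOn {e0}ᶜ x y)
    (v : {v | G.ReachOn {e0}ᶜ x v}) (hvx : v.1 ≠ x) :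
    (G.induce {v | G.ReachOn {e0}ᶜ x v}).degree v = G.degree v := by
  refine degree_induce_reachOn v fun e hve (he : e = e0) => ?_
  rw [he, he0, Sym2.mem_iff] at hve
  rcases hve with hve | hve
  · exact hvx hve
  · exact hxy (hve ▸ v.2)

/-- If the side of `x` is `r`-regular, the edge `e0` gives `x` degree at least `r + 1` in `G`. -/
lemma degree_ne_maxDegree_of_isRegular_induce [Fintype V] [Finite E]
    (he0 : G.inc e0 = s(x, y)) (hxy : ¬ G.ReachOn {e0}ᶜ x y)
    (hreg : (G.induce {v | G.ReachOn {e0}ᶜ x v}).IsRegular)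
    (v : {v | G.ReachOn {e0}ᶜ x v}) (hvx : v.1 ≠ x) : G.degree v ≠ G.maxDegree := by
  obtain ⟨r, hr⟩ := hreg
  have hx : r < G.degree x := by
    rw [← hr ⟨x, .refl⟩, degree_induce]
    exact degOn_lt_degree (notMem_edgesIn_compl_reachOn he0 hxy) (he0 ▸ Sym2.mem_mk_left x y)
  have := G.degree_le_maxDegree x
  rw [← degree_induce_compl_reachOn he0 hxy v hvx, hr]
  omega

theorem exists_isTree_induce_of_cutedge [Fintype V] [Fintype E]
    (he0 : G.inc e0 = s(x, y)) (hxy : ¬ G.ReachOn {e0}ᶜ x y)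
    (IH : ∀ (V' E' : Type) [Fintype V'] [Fintype E'] (G' : Multigraph V' E'),
      Fintype.card V' < Fintype.card V → G'.Connected → ¬ (G'.IsRegular ∧ G'.IsBipartite) →
      G'.HasWeaklyEvenSpanningTrees)
    {w : V} (hw : G.ReachOn {e0}ᶜ x w) (lam : Bool) :
    ∃ (S : Set (G.edgesIn {v | G.ReachOn {e0}ᶜ x v})) (c : {v | G.ReachOn {e0}ᶜ x v} → Bool),
      (G.induce _).IsTree Set.univ S ∧ (G.induce _).ProperOn S c ∧ c ⟨w, hw⟩ = lam ∧
      ∀ v, v.1 ≠ x → (G.induce _).IsLeaf S v → G.degree v = G.maxDegree → c v = false := by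
  classical
  set A := {v | G.ReachOn {e0}ᶜ x v}
  have hconn : (G.induce A).Connected := connected_induce_reachOn _ x
  by_cases hrb : (G.induce A).IsRegular ∧ (G.induce A).IsBipartite
  · obtain ⟨S, hS⟩ := hconn.exists_isTree_univ
    obtain ⟨c, hc, hcw⟩ := hrb.2.exists_properOn ⟨w, hw⟩ lam
    exact ⟨S, c, hS, hc.mono (Set.subset_univ S), hcw, fun v hvx _ hΔ =>
      absurd hΔ (degree_ne_maxDegree_of_isRegular_induce he0 hxy hrb.1 v hvx)⟩
  · have hcard : Fintype.card A < Fintype.card V := by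
      simpa only [Nat.card_eq_fintype_card] using Finite.card_subtype_lt (p := (· ∈ A)) hxy
    obtain ⟨S, c, hS, hc, hcw, hleaf⟩ :=
      IH A (G.edgesIn A) (G.induce A) hcard hconn hrb ⟨w, hw⟩ lam
    refine ⟨S, c, hS, hc, hcw, fun v hvx hvS hΔ => hleaf v hvS ?_⟩
    have hle := (G.induce A).degree_le_maxDegree v
    have hmax : (G.induce A).maxDegree ≤ G.maxDegree := maxDegree_induce_le
    rw [degree_induce_compl_reachOn he0 hxy v hvx] at hle ⊢
    omega

theorem exists_isTree_side_of_cutedge [Fintype V] [Fintype E]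
    (he0 : G.inc e0 = s(x, y)) (hxy : ¬ G.ReachOn {e0}ᶜ x y)
    (IH : ∀ (V' E' : Type) [Fintype V'] [Fintype E'] (G' : Multigraph V' E'),
      Fintype.card V' < Fintype.card V → G'.Connected → ¬ (G'.IsRegular ∧ G'.IsBipartite) →
      G'.HasWeaklyEvenSpanningTrees)
    {w : V} (hw : G.ReachOn {e0}ᶜ x w) (lam : Bool) :
    ∃ (S : Set E) (c : V → Bool), e0 ∉ S ∧ G.IsTree {v | G.ReachOn {e0}ᶜ x v} S ∧
      G.ProperOn S c ∧ c w = lam ∧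
      ∀ v : V, v ≠ x → G.IsLeaf S v → G.degree v = G.maxDegree → c v = false := by
  set A := {v | G.ReachOn {e0}ᶜ x v}
  obtain ⟨S, c, hS, hc, hcw, hleaf⟩ := exists_isTree_induce_of_cutedge he0 hxy IH hw lam
  refine ⟨Subtype.val '' S, Function.extend Subtype.val c fun _ => false, ?_, hS.of_induce,
    hc.of_induce, (extend_val_apply hw).trans hcw, fun v hvx hvS hΔ => ?_⟩
  · rintro ⟨e, -, he⟩
    exact notMem_edgesIn_compl_reachOn he0 hxy ((congrArg (· ∈ G.edgesIn A) he).mp e.2)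
  · by_cases hv : v ∈ A
    · rw [extend_val_apply hv]
      exact hleaf ⟨v, hv⟩ hvx (isLeaf_induce_iff.2 hvS) hΔ
    · exact Function.extend_apply' _ _ _ fun ⟨a, ha⟩ => hv (ha ▸ a.2)

end CutedgeSide

end Multigraph

/-- Let `G` be a connected multigraph with a cutedge `e0` with
endpoints `x1, x2`, and let `G₁`, `G₂` be the components of `G - e0` containing
`x1` and `x2` respectively (their vertex sets are the sets of vertices reachable
from `x1`, resp. `x2`, without using `e0`). Let `i ∈ {1,2}` (encoded by
`i : Fin 2`, with `i = 0` for `G₁`), `wi ∈ V(Gᵢ)` and `lami ∈ {0,1}` (with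
`false` for type 0 and `true` for type 1). Assume the induction hypothesis: every
connected multigraph with fewer vertices than `G` that is not regular bipartite
has, for every root vertex and type, a spanning weakly even rooted tree. Then
`Gᵢ` has a spanning `(wi, lami)`-tree `Tᵢ` (with edge set `S` and bipartition
`c`) such that no vertex of `Tᵢ` other than possibly `xᵢ` is a type-1 leaf of
`Tᵢ` having maximum degree in `G`. -/
theorem component_spanning_tree_claim {V E : Type} [Fintype V] [Fintype E]
    (G : Multigraph V E) (hconn : G.Connected)
    (e0 : E) (x1 x2 : V) (he0 : G.inc e0 = s(x1, x2)) (hcut : G.IsCutedge e0)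
    (IH : ∀ (V' E' : Type) [Fintype V'] [Fintype E'] (G' : Multigraph V' E'),
      Fintype.card V' < Fintype.card V →
      G'.Connected → ¬ (G'.IsRegular ∧ G'.IsBipartite) →
      ∀ (w' : V') (lam' : Bool),
        ∃ (S' : Set E') (c' : V' → Bool),
          G'.IsTree Set.univ S' ∧ G'.ProperOn S' c' ∧ c' w' = lam' ∧
          ∀ v : V', G'.IsLeaf S' v → G'.degree v = G'.maxDegree → c' v = false)
    (i : Fin 2) (wi : V) (lami : Bool)
    (hwi : wi ∈ {v : V | G.ReachOn {e0}ᶜ (if i = 0 then x1 else x2) v}) :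
    ∃ (S : Set E) (c : V → Bool),
      e0 ∉ S ∧
      G.IsTree {v : V | G.ReachOn {e0}ᶜ (if i = 0 then x1 else x2) v} S ∧
      G.ProperOn S c ∧
      c wi = lami ∧
      ∀ v : V, v ≠ (if i = 0 then x1 else x2) →
        G.IsLeaf S v → G.degree v = G.maxDegree → c v = false := by
  have hx12 : ¬ G.ReachOn {e0}ᶜ x1 x2 := hcut.not_reachOn hconn he0
  fin_cases i
  · exact Multigraph.exists_isTree_side_of_cutedge he0 hx12 IH hwi lami
  · exact Multigraph.exists_isTree_side_of_cutedge (he0.trans Sym2.eq_swap) (fun h => hx12 h.symm)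
      IH hwi lami
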